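/- arXiv:1904.03388 — 3 statements merged into one kernel-verified Lean document; each statement's English description precedes it below -/
import Mathlib

section
/- Let $c_0, \beta > 0$ and let $(a_m)_{m \geq 0}$ be a sequence of non-negative real numbers satisfying $a_m \leq c_0\, 2^{-m\beta} \sum_{k=0}^{m-1} a_k$ for all $m \geq 1$. Then for all $m \geq 1$ it holds $a_m \leq 2^{-m\beta} \exp\left(\frac{c_0}{1 - 2^{-\beta}}\right) a_0$. -/
/-!
Write `r = 2^(-β)` and `S m = ∑_{k<m} a k`. The recursion gives
`S (m+1) ≤ (1 + c₀ rᵐ) S m ≤ exp (c₀ rᵐ) S m`, so `S m` stays below `a 0` times the exponential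
of `c₀` times a partial geometric sum. Feeding this back into the recursion once more, and
absorbing the factor `c₀ ≤ exp c₀` as the term `j = 0` of that geometric sum, bounds
`a m / rᵐ` by `exp (c₀ ∑_{j<m} rʲ) a 0 ≤ exp (c₀ / (1 - r)) a 0`.
-/

open Finset Real

section GeometricRecursion

variable {a : ℕ → ℝ} {c r : ℝ}

theorem sum_range_succ_le_mul_exp_of_le_mul_sum (ha : ∀ m, 0 ≤ a m)
    (hrec : ∀ m, 1 ≤ m → a m ≤ c * r ^ m * ∑ k ∈ range m, a k) (n : ℕ) :
    ∑ k ∈ range (n + 1), a k ≤ a 0 * exp (c * ∑ j ∈ range n, r ^ (j + 1)) := by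
  induction n with
  | zero => simp
  | succ n ih =>
    set S := ∑ k ∈ range (n + 1), a k
    have hS : 0 ≤ S := sum_nonneg fun k _ => ha k
    calc ∑ k ∈ range (n + 2), a k = S + a (n + 1) := sum_range_succ a (n + 1)
      _ ≤ (c * r ^ (n + 1) + 1) * S := by nlinarith [hrec (n + 1) (by omega)]
      _ ≤ exp (c * r ^ (n + 1)) * (a 0 * exp (c * ∑ j ∈ range n, r ^ (j + 1))) := by
        gcongr
        exact add_one_le_exp _
      _ = a 0 * exp (c * ∑ j ∈ range (n + 1), r ^ (j + 1)) := by
        rw [sum_range_succ, mul_add, exp_add]; ring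

theorem le_pow_mul_exp_mul_of_le_mul_sum (hc : 0 ≤ c) (hr₀ : 0 ≤ r) (hr₁ : r < 1)
    (ha : ∀ m, 0 ≤ a m) (hrec : ∀ m, 1 ≤ m → a m ≤ c * r ^ m * ∑ k ∈ range m, a k)
    (m : ℕ) (hm : 1 ≤ m) :
    a m ≤ r ^ m * exp (c / (1 - r)) * a 0 := by
  obtain ⟨n, rfl⟩ := Nat.exists_eq_add_of_le' hm
  have ha0 := ha 0
  have hgeom : ∑ j ∈ range (n + 1), r ^ j ≤ 1 / (1 - r) := by
    have := geom_sum_Ico_le_of_lt_one (m := 0) (n := n + 1) hr₀ hr₁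
    rwa [pow_zero, ← range_eq_Ico] at this
  calc a (n + 1) ≤ c * r ^ (n + 1) * ∑ k ∈ range (n + 1), a k := hrec (n + 1) hm
    _ ≤ c * r ^ (n + 1) * (a 0 * exp (c * ∑ j ∈ range n, r ^ (j + 1))) := by
        gcongr
        exact sum_range_succ_le_mul_exp_of_le_mul_sum ha hrec n
    _ = r ^ (n + 1) * (c * exp (c * ∑ j ∈ range n, r ^ (j + 1))) * a 0 := by ring
    _ ≤ r ^ (n + 1) * (exp c * exp (c * ∑ j ∈ range n, r ^ (j + 1))) * a 0 := by
        gcongr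
        linarith [add_one_le_exp c]
    _ = r ^ (n + 1) * exp (c * ∑ j ∈ range (n + 1), r ^ j) * a 0 := by
        rw [← exp_add, sum_range_succ' (fun j => r ^ j)]; ring_nf
    _ ≤ r ^ (n + 1) * exp (c / (1 - r)) * a 0 := by
        gcongr
        rw [← mul_one_div]
        exact mul_le_mul_of_nonneg_left hgeom hc

end GeometricRecursion

theorem two_rpow_neg_natCast_mul (β : ℝ) (m : ℕ) :
    (2 : ℝ) ^ (-(m : ℝ) * β) = ((2 : ℝ) ^ (-β)) ^ m := by
  rw [← rpow_natCast, ← rpow_mul zero_le_two]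
  ring_nf

theorem iterative_sequence_decay
    (c0 β : ℝ) (hc0 : 0 < c0) (hβ : 0 < β)
    (a : ℕ → ℝ) (ha : ∀ m, 0 ≤ a m)
    (hrec : ∀ m : ℕ, 1 ≤ m →
      a m ≤ c0 * (2 : ℝ) ^ (-(m : ℝ) * β) * ∑ k ∈ Finset.range m, a k) :
    ∀ m : ℕ, 1 ≤ m →
      a m ≤ (2 : ℝ) ^ (-(m : ℝ) * β) * Real.exp (c0 / (1 - (2 : ℝ) ^ (-β))) * a 0 := by
  simp only [two_rpow_neg_natCast_mul] at hrec ⊢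
  exact le_pow_mul_exp_mul_of_le_mul_sum hc0.le (rpow_nonneg zero_le_two _)
    (rpow_lt_one_of_one_lt_of_neg one_lt_two (neg_neg_of_pos hβ)) ha hrec
end

section
/- Let $p \geq 2$ and $M \geq 0$, and define $\psi(t) := (M + t^{1/p'})^{p'-2} t^{2/p'}$ for $t \geq 0$, where $p' = p/(p-1)$. Then $\psi$ is comparable, with constants depending only on $p$, to the function which equals $M^{p'-2} t^{2/p'}$ for $t^{1/p'} \leq M$ and equals $t$ for $t^{1/p'} > M$; in particular $\psi$ is comparable to a continuous convex function on $[0,\infty)$. -/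
/-! Write `s = t ^ (1 / p')`, so that `ψ(t) = (M + s) ^ (p' - 2) * s ^ 2`. Since `-1 ≤ p' - 2 ≤ 0`,
replacing `M + s` by `max M s` changes `(M + s) ^ (p' - 2)` by a factor between `1` and `2`, and
`max M s ^ (p' - 2) * s ^ 2` is exactly the piecewise function. The same argument with `t + M ^ p'`
and `max t (M ^ p')` puts `(t + M ^ p') ^ (1 - 2 / p') * t ^ (2 / p')` within the same factor of
the piecewise function; this last function is convex, being the perspective
`(t + A) * f (t / (t + A))` of the convex function `f x = x ^ (2 / p')`. -/

open Real Set

theorem ConvexOn.perspective_add_const {f : ℝ → ℝ} (hf : ConvexOn ℝ (Ici 0) f) {A : ℝ}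
    (hA : 0 < A) : ConvexOn ℝ (Ici 0) fun t => (t + A) * f (t / (t + A)) := by
  refine ⟨convex_Ici 0, fun a (ha : 0 ≤ a) b (hb : 0 ≤ b) μ ν hμ hν hμν => ?_⟩
  simp only [smul_eq_mul]
  set T := μ * a + ν * b + A
  have haA : 0 < a + A := by linarith
  have hbA : 0 < b + A := by linarith
  have hT : 0 < T := by positivity
  have hweights : μ * (a + A) / T + ν * (b + A) / T = 1 := by
    rw [← add_div, div_eq_one_iff_eq hT.ne']
    linear_combination A * hμν
  have hjensen := hf.2 (x := a / (a + A)) (y := b / (b + A)) (by simp only [mem_Ici]; positivity)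
    (by simp only [mem_Ici]; positivity) (by positivity) (by positivity) hweights
  have hpoint : μ * (a + A) / T * (a / (a + A)) + ν * (b + A) / T * (b / (b + A)) =
      (μ * a + ν * b) / T := by
    field_simp
  simp only [smul_eq_mul, hpoint] at hjensen
  calc T * f ((μ * a + ν * b) / T)
      ≤ T * (μ * (a + A) / T * f (a / (a + A)) + ν * (b + A) / T * f (b / (b + A))) :=
        mul_le_mul_of_nonneg_left hjensen hT.le
    _ = μ * ((a + A) * f (a / (a + A))) + ν * ((b + A) * f (b / (b + A))) := by
        field_simp

lemma add_mul_div_add_rpow {t A q : ℝ} (ht : 0 ≤ t) (htA : 0 < t + A) :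
    (t + A) * (t / (t + A)) ^ q = (t + A) ^ (1 - q) * t ^ q := by
  rw [div_rpow ht htA.le, rpow_sub htA, rpow_one]
  field_simp

lemma rpow_one_sub_mul_rpow_self {t q : ℝ} (ht : 0 ≤ t) : t ^ (1 - q) * t ^ q = t := by
  rw [← rpow_add' ht (by norm_num), sub_add_cancel, rpow_one]

lemma convexOn_add_rpow_one_sub_mul_rpow {q A : ℝ} (hq : 1 ≤ q) (hA : 0 ≤ A) :
    ConvexOn ℝ (Ici 0) fun t => (t + A) ^ (1 - q) * t ^ q := by
  rcases hA.eq_or_lt with rfl | hA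
  · refine (convexOn_id (convex_Ici 0)).congr fun t (ht : 0 ≤ t) => ?_
    simp [rpow_one_sub_mul_rpow_self ht]
  · refine ((convexOn_rpow hq).perspective_add_const hA).congr fun t (ht : 0 ≤ t) => ?_
    exact add_mul_div_add_rpow ht (by linarith)

lemma continuousOn_add_rpow_one_sub_mul_rpow {q A : ℝ} (hq : 0 ≤ q) (hA : 0 ≤ A) :
    ContinuousOn (fun t => (t + A) ^ (1 - q) * t ^ q) (Ici 0) := by
  rcases hA.eq_or_lt with rfl | hA
  · refine continuousOn_id.congr fun t (ht : 0 ≤ t) => ?_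
    simp [rpow_one_sub_mul_rpow_self ht]
  · refine fun t (ht : 0 ≤ t) => ContinuousAt.continuousWithinAt ?_
    have htA : t + A ≠ 0 := by linarith
    exact ((continuousAt_id.add continuousAt_const).rpow_const (.inl htA)).mul
      (continuousAt_rpow_const t q (.inr hq))

lemma rpow_add_le_rpow_max {x y r : ℝ} (hx : 0 ≤ x) (hy : 0 ≤ y) (hr : r ≤ 0) :
    (x + y) ^ r ≤ max x y ^ r := by
  rcases (le_max_iff.mpr (Or.inl hx)).eq_or_lt with h | h
  · obtain rfl : x = 0 := le_antisymm (h ▸ le_max_left x y) hx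
    obtain rfl : y = 0 := le_antisymm (h ▸ le_max_right 0 y) hy
    simp
  · exact rpow_le_rpow_of_nonpos h (max_le_add_of_nonneg hx hy) hr

lemma inv_two_mul_rpow_max_le_rpow_add {x y r : ℝ} (hx : 0 ≤ x) (hy : 0 ≤ y) (hr : -1 ≤ r)
    (hr0 : r ≤ 0) : 2⁻¹ * max x y ^ r ≤ (x + y) ^ r := by
  have hm : 0 ≤ max x y := le_max_of_le_left hx
  rcases (add_nonneg hx hy).eq_or_lt with h | h
  · obtain ⟨rfl, rfl⟩ := (add_eq_zero_iff_of_nonneg hx hy).mp h.symm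
    simp only [max_self, add_zero]
    linarith [rpow_nonneg le_rfl r]
  calc 2⁻¹ * max x y ^ r ≤ 2 ^ r * max x y ^ r := by
        gcongr
        rw [← rpow_neg_one]
        exact rpow_le_rpow_of_exponent_le one_le_two hr
    _ = (2 * max x y) ^ r := (mul_rpow zero_le_two hm).symm
    _ ≤ (x + y) ^ r := rpow_le_rpow_of_nonpos h (by linarith [le_max_left x y, le_max_right x y]) hr0

noncomputable def psiModel (p' M t : ℝ) : ℝ := max M (t ^ (1 / p')) ^ (p' - 2) * t ^ (2 / p')

section psiModel

variable {p' M t : ℝ}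

lemma psiModel_nonneg (hM : 0 ≤ M) (ht : 0 ≤ t) : 0 ≤ psiModel p' M t := by
  unfold psiModel
  have : 0 ≤ max M (t ^ (1 / p')) := le_max_of_le_left hM
  positivity

lemma psiModel_eq_ite (hp' : 0 < p') (ht : 0 ≤ t) :
    psiModel p' M t = if t ^ (1 / p') ≤ M then M ^ (p' - 2) * t ^ (2 / p') else t := by
  unfold psiModel
  split_ifs with h
  · rw [max_eq_left h]
  · have hexp : 1 / p' * (p' - 2) + 2 / p' = 1 := by field_simp; ring
    rw [max_eq_right (not_le.mp h).le, ← rpow_mul ht, ← rpow_add' ht (by rw [hexp]; norm_num),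
      hexp, rpow_one]

lemma psiModel_eq_max_rpow_mul (hp' : 0 < p') (hM : 0 ≤ M) (ht : 0 ≤ t) :
    psiModel p' M t = max t (M ^ p') ^ (1 - 2 / p') * t ^ (2 / p') := by
  have hmax : max t (M ^ p') = max M (t ^ (1 / p')) ^ p' := by
    rw [rpow_max hM (rpow_nonneg ht _) hp'.le, ← rpow_mul ht, one_div_mul_cancel hp'.ne',
      rpow_one, max_comm]
  rw [psiModel, hmax, ← rpow_mul (le_max_of_le_left hM)]
  congr 2
  field_simp

lemma psi_mem_Icc (h1 : 1 ≤ p') (h2 : p' ≤ 2) (hM : 0 ≤ M) (ht : 0 ≤ t) :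
    (M + t ^ (1 / p')) ^ (p' - 2) * t ^ (2 / p') ∈
      Icc (2⁻¹ * psiModel p' M t) (psiModel p' M t) := by
  have hs := rpow_nonneg ht (1 / p')
  have hq := rpow_nonneg ht (2 / p')
  rw [psiModel, ← mul_assoc]
  exact ⟨mul_le_mul_of_nonneg_right (inv_two_mul_rpow_max_le_rpow_add hM hs (by linarith)
    (by linarith)) hq, mul_le_mul_of_nonneg_right (rpow_add_le_rpow_max hM hs (by linarith)) hq⟩

lemma add_rpow_mul_rpow_mem_Icc (h1 : 1 ≤ p') (h2 : p' ≤ 2) (hM : 0 ≤ M) (ht : 0 ≤ t) :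
    (t + M ^ p') ^ (1 - 2 / p') * t ^ (2 / p') ∈
      Icc (2⁻¹ * psiModel p' M t) (psiModel p' M t) := by
  have hA := rpow_nonneg hM p'
  have hq := rpow_nonneg ht (2 / p')
  have hq1 : 1 ≤ 2 / p' := by rw [le_div_iff₀ (by linarith)]; linarith
  have hq2 : 2 / p' ≤ 2 := by rw [div_le_iff₀ (by linarith)]; linarith
  rw [psiModel_eq_max_rpow_mul (by linarith) hM ht, ← mul_assoc]
  exact ⟨mul_le_mul_of_nonneg_right (inv_two_mul_rpow_max_le_rpow_add ht hA (by linarith)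
    (by linarith)) hq, mul_le_mul_of_nonneg_right (rpow_add_le_rpow_max ht hA (by linarith)) hq⟩

end psiModel

theorem psi_comparable_to_convex
    (p M : ℝ) (hp : 2 ≤ p) (hM : 0 ≤ M) :
    ∃ c C : ℝ, 0 < c ∧ 0 < C ∧
      (∀ t : ℝ, 0 ≤ t →
        (c * (if t ^ (1 / (p / (p - 1))) ≤ M then
                M ^ (p / (p - 1) - 2) * t ^ (2 / (p / (p - 1)))
              else t) ≤
            (M + t ^ (1 / (p / (p - 1)))) ^ (p / (p - 1) - 2) * t ^ (2 / (p / (p - 1))) ∧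
          (M + t ^ (1 / (p / (p - 1)))) ^ (p / (p - 1) - 2) * t ^ (2 / (p / (p - 1))) ≤
            C * (if t ^ (1 / (p / (p - 1))) ≤ M then
                  M ^ (p / (p - 1) - 2) * t ^ (2 / (p / (p - 1)))
                else t))) ∧
      ∃ φ : ℝ → ℝ, ConvexOn ℝ (Set.Ici (0 : ℝ)) φ ∧ ContinuousOn φ (Set.Ici (0 : ℝ)) ∧
        ∀ t : ℝ, 0 ≤ t →
          c * φ t ≤ (M + t ^ (1 / (p / (p - 1)))) ^ (p / (p - 1) - 2) * t ^ (2 / (p / (p - 1))) ∧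
            (M + t ^ (1 / (p / (p - 1)))) ^ (p / (p - 1) - 2) * t ^ (2 / (p / (p - 1))) ≤ C * φ t := by
  set p' := p / (p - 1)
  have h1 : 1 ≤ p' := by rw [le_div_iff₀ (by linarith)]; linarith
  have h2 : p' ≤ 2 := by rw [div_le_iff₀ (by linarith)]; linarith
  have hq1 : 1 ≤ 2 / p' := by rw [le_div_iff₀ (by linarith)]; linarith
  have hA := rpow_nonneg hM p'
  refine ⟨2⁻¹, 2, by norm_num, by norm_num, fun t ht => ?_,
    fun t => (t + M ^ p') ^ (1 - 2 / p') * t ^ (2 / p'),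
    convexOn_add_rpow_one_sub_mul_rpow hq1 hA,
    continuousOn_add_rpow_one_sub_mul_rpow (by linarith) hA, fun t ht => ?_⟩
  · obtain ⟨hlow, hup⟩ := psi_mem_Icc h1 h2 hM ht
    rw [← psiModel_eq_ite (by linarith) ht]
    exact ⟨hlow, by linarith [psiModel_nonneg (p' := p') hM ht]⟩
  · obtain ⟨hlow, hup⟩ := psi_mem_Icc h1 h2 hM ht
    obtain ⟨hφlow, hφup⟩ := add_rpow_mul_rpow_mem_Icc h1 h2 hM ht
    exact ⟨by linarith, by linarith⟩
end

section
/- Let $p \geq 2$ and define $A(Q) = |Q|^{p-2}Q$ on $\mathbb{R}^2 \setminus \{0\}$, which is differentiable there with derivative $DA$. Define $H(P,Q) := A(P) - A(Q) - (DA)(Q)(P-Q)$. Then there exists $c > 0$ depending only on $p$ such that for all $P, Q \in \mathbb{R}^2$ with $Q \neq 0$ and $|P - Q| \geq \frac{1}{2}|Q|$: $|H(P,Q)| \leq c\,|A(P) - A(Q)| \cdot \frac{|P-Q|}{|Q| + |P-Q|}$. -/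
/-!
Write `A(x) = ‖x‖ ^ r • x` with `r = p - 2`. The derivative `DA(y)` has operator norm at most
`(1 + r) ‖y‖ ^ r`, and monotonicity of `A` gives `‖y‖ ^ r ‖x - y‖ ≤ 2 ‖A x - A y‖`. Hence the
Taylor remainder is bounded by a multiple of `‖A x - A y‖` for all `x`, with no smallness
condition. In the far case `‖y‖ / 2 ≤ ‖x - y‖` the factor `‖x - y‖ / (‖y‖ + ‖x - y‖)` is at
least `1 / 3`, so it can be inserted at the cost of a factor `3`.
-/

open Real RealInnerProductSpace

variable {E : Type*} [NormedAddCommGroup E] [InnerProductSpace ℝ E]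

theorem hasFDerivAt_norm_rpow_of_ne_zero {x : E} (hx : x ≠ 0) (r : ℝ) :
    HasFDerivAt (fun x : E ↦ ‖x‖ ^ r) ((r * ‖x‖ ^ (r - 2)) • innerSL ℝ x) x := by
  apply HasStrictFDerivAt.hasFDerivAt
  convert! (hasStrictFDerivAt_norm_sq x).rpow_const (p := r / 2) (by simp [hx]) using 0
  simp_rw [← Real.rpow_natCast_mul (norm_nonneg _), ← Nat.cast_smul_eq_nsmul ℝ, smul_smul]
  ring_nf

theorem hasFDerivAt_norm_rpow_smul {x : E} (hx : x ≠ 0) (r : ℝ) :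
    HasFDerivAt (fun x : E ↦ ‖x‖ ^ r • x)
      (‖x‖ ^ r • ContinuousLinearMap.id ℝ E + ((r * ‖x‖ ^ (r - 2)) • innerSL ℝ x).smulRight x)
      x :=
  (hasFDerivAt_norm_rpow_of_ne_zero hx r).smul (hasFDerivAt_id x)

theorem norm_fderiv_norm_rpow_smul_apply_le {x : E} (hx : x ≠ 0) (r : ℝ) (v : E) :
    ‖fderiv ℝ (fun x : E ↦ ‖x‖ ^ r • x) x v‖ ≤ (1 + |r|) * ‖x‖ ^ r * ‖v‖ := by
  have hx₀ : 0 < ‖x‖ := norm_pos_iff.2 hx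
  have hpow : ‖x‖ ^ (r - 2) * ‖x‖ ^ 2 = ‖x‖ ^ r := by
    rw [← rpow_natCast, ← rpow_add hx₀]
    norm_num
  rw [(hasFDerivAt_norm_rpow_smul hx r).fderiv]
  simp only [add_apply, smul_apply, ContinuousLinearMap.id_apply, ContinuousLinearMap.smulRight_apply, innerSL_apply_apply]
  calc ‖‖x‖ ^ r • v + (r * ‖x‖ ^ (r - 2) * ⟪x, v⟫) • x‖
      ≤ ‖x‖ ^ r * ‖v‖ + |r| * ‖x‖ ^ (r - 2) * (‖x‖ * ‖v‖) * ‖x‖ := by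
        refine (norm_add_le _ _).trans (add_le_add ?_ ?_)
        · rw [norm_smul, norm_of_nonneg (by positivity)]
        · rw [norm_smul, norm_mul, norm_mul, norm_eq_abs r, norm_eq_abs ⟪x, v⟫,
            norm_of_nonneg (by positivity : 0 ≤ ‖x‖ ^ (r - 2))]
          gcongr
          exact abs_real_inner_le_norm x v
    _ = (1 + |r|) * ‖x‖ ^ r * ‖v‖ := by
        rw [← hpow]
        ring

theorem half_mul_norm_sub_sq_le_inner_norm_rpow_smul_sub {r : ℝ} (hr : 0 ≤ r) (x y : E) :
    (‖x‖ ^ r + ‖y‖ ^ r) / 2 * ‖x - y‖ ^ 2 ≤ ⟪‖x‖ ^ r • x - ‖y‖ ^ r • y, x - y⟫ := by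
  have hinner : ⟪‖x‖ ^ r • x - ‖y‖ ^ r • y, x - y⟫
      = ‖x‖ ^ r * ‖x‖ ^ 2 - (‖x‖ ^ r + ‖y‖ ^ r) * ⟪x, y⟫ + ‖y‖ ^ r * ‖y‖ ^ 2 := by
    simp only [inner_sub_left, inner_sub_right, real_inner_smul_left,
      real_inner_self_eq_norm_sq, real_inner_comm x y]
    ring
  have hsign : 0 ≤ (‖x‖ ^ r - ‖y‖ ^ r) * (‖x‖ ^ 2 - ‖y‖ ^ 2) := by
    rcases le_total ‖x‖ ‖y‖ with h | h
    · exact mul_nonneg_of_nonpos_of_nonpos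
        (sub_nonpos.2 (rpow_le_rpow (norm_nonneg x) h hr)) (sub_nonpos.2 (by gcongr))
    · exact mul_nonneg
        (sub_nonneg.2 (rpow_le_rpow (norm_nonneg y) h hr)) (sub_nonneg.2 (by gcongr))
  rw [hinner, norm_sub_sq_real]
  linarith

theorem norm_rpow_mul_norm_sub_le {r : ℝ} (hr : 0 ≤ r) (x y : E) :
    ‖y‖ ^ r * ‖x - y‖ ≤ 2 * ‖‖x‖ ^ r • x - ‖y‖ ^ r • y‖ := by
  rcases (norm_nonneg (x - y)).eq_or_lt with h | hpos
  · rw [← h, mul_zero]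
    positivity
  refine le_of_mul_le_mul_right ?_ hpos
  have hmono := half_mul_norm_sub_sq_le_inner_norm_rpow_smul_sub hr x y
  have hcs := real_inner_le_norm (‖x‖ ^ r • x - ‖y‖ ^ r • y) (x - y)
  have hx_nonneg : 0 ≤ ‖x‖ ^ r * ‖x - y‖ ^ 2 := by positivity
  nlinarith

theorem norm_taylor_remainder_norm_rpow_smul_le {r : ℝ} (hr : 0 ≤ r) {y : E} (hy : y ≠ 0)
    (x : E) :
    ‖‖x‖ ^ r • x - ‖y‖ ^ r • y - fderiv ℝ (fun x : E ↦ ‖x‖ ^ r • x) y (x - y)‖ ≤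
      (3 + 2 * r) * ‖‖x‖ ^ r • x - ‖y‖ ^ r • y‖ := by
  have hderiv := norm_fderiv_norm_rpow_smul_apply_le hy r (x - y)
  have hmono := norm_rpow_mul_norm_sub_le hr x y
  rw [abs_of_nonneg hr] at hderiv
  calc _ ≤ ‖‖x‖ ^ r • x - ‖y‖ ^ r • y‖ + (1 + r) * (‖y‖ ^ r * ‖x - y‖) := by
        refine (norm_sub_le _ _).trans ?_
        linarith
    _ ≤ _ := by nlinarith

theorem taylor_remainder_far_case
    (p : ℝ) (hp : 2 ≤ p) :
    ∃ c : ℝ, 0 < c ∧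
      ∀ P Q : EuclideanSpace ℝ (Fin 2), Q ≠ 0 → ‖Q‖ / 2 ≤ ‖P - Q‖ →
        ‖(‖P‖ ^ (p - 2) • P) - (‖Q‖ ^ (p - 2) • Q) -
            fderiv ℝ (fun R : EuclideanSpace ℝ (Fin 2) => ‖R‖ ^ (p - 2) • R) Q (P - Q)‖ ≤
          c * ‖(‖P‖ ^ (p - 2) • P) - (‖Q‖ ^ (p - 2) • Q)‖ *
            (‖P - Q‖ / (‖Q‖ + ‖P - Q‖)) := by
  have hr : 0 ≤ p - 2 := by linarith
  refine ⟨3 * (3 + 2 * (p - 2)), by positivity, fun P Q hQ hfar ↦ ?_⟩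
  have hQ₀ : 0 < ‖Q‖ := norm_pos_iff.2 hQ
  have hratio : 1 / 3 ≤ ‖P - Q‖ / (‖Q‖ + ‖P - Q‖) := by
    rw [le_div_iff₀ (by linarith)]
    linarith
  calc _ ≤ (3 + 2 * (p - 2)) * ‖‖P‖ ^ (p - 2) • P - ‖Q‖ ^ (p - 2) • Q‖ :=
        norm_taylor_remainder_norm_rpow_smul_le hr hQ P
    _ = 3 * (3 + 2 * (p - 2)) * ‖‖P‖ ^ (p - 2) • P - ‖Q‖ ^ (p - 2) • Q‖ * (1 / 3) := by ring
    _ ≤ _ := by gcongr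
end
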